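/- Fix d ≥ 1 and n ≥ 1 and let ζ ∈ R_n be a nonunit. For each d-tuple ε = (ε_1,…,ε_d) of n-th roots of unity let σ_ε be the ℂ-algebra automorphism of R_n = ℂ[[T_1,…,T_d]] determined by T_i ↦ ε_i T_i. Then the following are equivalent: (a) for every such ε, either σ_ε(ζ) = ζ or σ_ε(ζ) − ζ = X^λ·H for some λ ∈ (1/n)ℤ^d_{≥0} and some unit H of R_n (this says exactly that the minimal polynomial of ζ over ℂ[[X_1,…,X_d]] is a quasi-ordinary polynomial); (b) there exist g ≥ 0 and elements λ_1, …, λ_g of (1/n)ℤ^d_{≥0} such that, setting M_0 := ℤ^d and M_j := M_{j-1} + ℤλ_j: (1) λ_1 < λ_2 < ⋯ < λ_g componentwise and each λ_i has nonzero coefficient in ζ; (2) every exponent λ with nonzero coefficient in ζ lies in ℤ^d + Σ_{i : λ_i ≤ λ} ℤλ_i; (3) λ_j ∉ M_{j-1} for all j. Moreover, when they exist, such λ_1, …, λ_g are uniquely determined by ζ. -/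

import Mathlib

set_option synthInstance.maxHeartbeats 1000000

/-- The lattice `ℤ^d` inside `ℚ^d`. -/
def intCastHomQ (d : ℕ) : (Fin d → ℤ) →+ (Fin d → ℚ) where
  toFun x := fun i => (x i : ℚ)
  map_zero' := by funext i; simp
  map_add' x y := by funext i; simp

/-- The lattices `M_0 = ℤ^d`, `M_j = M_{j-1} + ℤ·λ_j`. -/
def Mlat (d : ℕ) (lam : ℕ → Fin d → ℚ) : ℕ → AddSubgroup (Fin d → ℚ)
  | 0 => (intCastHomQ d).range
  | (j + 1) => Mlat d lam j ⊔ AddSubgroup.closure {lam (j + 1)}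

/-- The exponent `m/n ∈ (1/n)ℤ^d` of the monomial `X^{m/n} = T^m`. -/
def expQ (d n : ℕ) (m : Fin d →₀ ℕ) : Fin d → ℚ := fun i => (m i : ℚ) / n

/-- `ζ ∈ R_n = ℂ[[T₁,…,T_d]] = ℂ[[X₁^{1/n},…,X_d^{1/n}]]` is a quasi-ordinary branch with
characteristic exponents `lam 1 < ⋯ < lam g`:
(1) the `lam j` are totally ordered exponents of `ζ` with nonzero coefficient;
(2) every exponent of `ζ` lies in `ℤ^d + Σ_{i : lam i ≤ λ} ℤ·lam i`;
(3) `lam j ∉ M_{j-1}`. -/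
def IsQOBranch (d n g : ℕ) (ζ : MvPowerSeries (Fin d) ℂ) (lam : ℕ → Fin d → ℚ) : Prop :=
  (∀ j, 1 ≤ j → j ≤ g →
    ∃ m : Fin d →₀ ℕ, expQ d n m = lam j ∧ MvPowerSeries.coeff m ζ ≠ 0) ∧
  (∀ j, 1 ≤ j → j < g → lam j < lam (j + 1)) ∧
  (∀ m : Fin d →₀ ℕ, MvPowerSeries.coeff m ζ ≠ 0 →
    expQ d n m ∈ (intCastHomQ d).range ⊔
      AddSubgroup.closure {x | ∃ j, 1 ≤ j ∧ j ≤ g ∧ lam j ≤ expQ d n m ∧ x = lam j}) ∧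
  (∀ j, 1 ≤ j → j ≤ g → lam j ∉ Mlat d lam (j - 1))

/-- The subset `ℂ[[X₁,…,X_d]] ⊆ R_n`: series all of whose exponents are divisible by `n`. -/
def bigXRing (d n : ℕ) : Set (MvPowerSeries (Fin d) ℂ) :=
  {φ | ∀ m : Fin d →₀ ℕ, MvPowerSeries.coeff m φ ≠ 0 → ∀ i, n ∣ m i}

instance (d : ℕ) : IsDomain (MvPowerSeries (Fin d) ℂ) := NoZeroDivisors.to_isDomain _

open Finset in
/-- The ℂ-algebra automorphism of `ℂ[[T₁,…,T_d]]` determined by `T_i ↦ ε_i T_i`,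
described through its action on coefficients. -/
noncomputable def rescale (d : ℕ) (ε : Fin d → ℂ) (φ : MvPowerSeries (Fin d) ℂ) :
    MvPowerSeries (Fin d) ℂ :=
  fun m => (∏ i, ε i ^ (m i)) * MvPowerSeries.coeff m φ

/-!
The automorphism `σ_ε`, with `ε_i = e^{2πi a_i/n}`, multiplies the monomial `X^λ` by
`e^{2πi⟨a,λ⟩}`, a character of `ℚ^d/ℤ^d`. So `σ_ε ζ - ζ` is supported on the exponents of `ζ`
outside the kernel of this character, and condition (a) says that each such set of exponents is
empty or has a least element. By duality for the finite groups `(1/n)ℤ^d / M`, any two exponents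
outside a lattice `ℤ^d ≤ M ≤ (1/n)ℤ^d` are moved by one character trivial on `M`; hence under (a)
the exponents outside `M` also have a least element. Choosing `λ_j` as the least exponent outside
`M_{j-1}` produces characteristic exponents, the chain `M_j` being strictly increasing inside the
noetherian group `(1/n)ℤ^d`. Conversely, condition (2) shows that the least exponent moved by a
character is the first `λ_j` it moves, and the same least-element description of `λ_j` gives
uniqueness.
-/

open MvPowerSeries

lemma AddChar.map_sum_eq_prod {A M ι : Type*} [AddCommMonoid A] [CommMonoid M]
    (ψ : AddChar A M) (s : Finset ι) (f : ι → A) : ψ (∑ i ∈ s, f i) = ∏ i ∈ s, ψ (f i) :=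
  map_prod ψ.toMonoidHom (fun i => Multiplicative.ofAdd (f i)) s

lemma MvPowerSeries.exists_monomial_mul_isUnit_iff {σ k : Type*} [Field k]
    (φ : MvPowerSeries σ k) :
    (∃ m H, IsUnit H ∧ φ = monomial m 1 * H) ↔ ∃ m, IsLeast {m | coeff m φ ≠ 0} m := by
  constructor
  · rintro ⟨m, H, hH, rfl⟩
    refine ⟨m, ?_, fun m' hm' => ?_⟩
    · simpa [coeff_monomial_mul] using (isUnit_iff_constantCoeff.1 hH).ne_zero
    · by_contra h
      simp [coeff_monomial_mul, h] at hm'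
  · rintro ⟨m, hm, hmin⟩
    obtain ⟨H, hH⟩ : ∃ H : MvPowerSeries σ k, ∀ j, coeff j H = coeff (m + j) φ :=
      ⟨fun j => coeff (m + j) φ, fun j => rfl⟩
    refine ⟨m, H, ?_, ?_⟩
    · rw [isUnit_iff_constantCoeff, ← coeff_zero_eq_constantCoeff_apply, hH, add_zero]
      exact isUnit_iff_ne_zero.2 hm
    · ext j
      rw [coeff_monomial_mul]
      split_ifs with h
      · rw [one_mul, hH, add_tsub_cancel_of_le h]
      · by_contra hj
        exact h (hmin hj)

lemma exists_not_lt_succ_of_le_range {A B : Type*} [AddCommGroup A] [AddGroup B]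
    [IsNoetherian ℤ A] (f : A →+ B) (L : ℕ → AddSubgroup B) (hL : ∀ j, L j ≤ f.range) :
    ∃ j, ¬ L j < L (j + 1) := by
  obtain ⟨j, hj⟩ := WellFounded.not_rel_apply_succ (r := (· > ·))
    fun j => AddSubgroup.toIntSubmodule ((L j).comap f)
  refine ⟨j, fun hlt => hj ?_⟩
  simp only [gt_iff_lt, OrderIso.lt_iff_lt]
  refine lt_of_le_of_ne (AddSubgroup.comap_mono hlt.le) fun heq => hlt.ne ?_
  rw [← AddSubgroup.map_comap_eq_self (hL j), heq, AddSubgroup.map_comap_eq_self (hL _)]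

namespace QuasiOrdinary

open Complex
open scoped Real

variable {d n : ℕ}

/-- Its range is the lattice `(1/n)ℤ^d` of exponents of `R_n`. -/
def divHom (d n : ℕ) : (Fin d → ℤ) →+ (Fin d → ℚ) where
  toFun w i := (w i : ℚ) / n
  map_zero' := by funext i; simp
  map_add' w v := by funext i; simp [add_div]

@[simp]
lemma divHom_apply (w : Fin d → ℤ) (i : Fin d) : divHom d n w i = w i / n := rfl

lemma intCastHomQ_apply (w : Fin d → ℤ) (i : Fin d) : intCastHomQ d w i = w i := rfl

lemma expQ_eq_divHom (m : Fin d →₀ ℕ) : expQ d n m = divHom d n (fun i => m i) := by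
  funext i; simp [expQ]

lemma expQ_mem_divHom_range (m : Fin d →₀ ℕ) : expQ d n m ∈ (divHom d n).range :=
  ⟨_, (expQ_eq_divHom m).symm⟩

lemma expQ_le_expQ_iff (hn : n ≠ 0) {m m' : Fin d →₀ ℕ} :
    expQ d n m ≤ expQ d n m' ↔ m ≤ m' := by
  simp only [Pi.le_def, Finsupp.le_def, expQ]
  exact forall_congr' fun i => by
    rw [div_le_div_iff_of_pos_right (by positivity), Nat.cast_le]

lemma intCastHomQ_range_le_divHom_range (hn : n ≠ 0) :
    (intCastHomQ d).range ≤ (divHom d n).range := by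
  rintro _ ⟨w, rfl⟩
  exact ⟨n * w, funext fun i => by simp [intCastHomQ_apply, hn]⟩

lemma divHom_mem_intCastHomQ_range (hn : n ≠ 0) {w : Fin d → ℤ}
    (hw : ∀ i, (n : ℤ) ∣ w i) :
    divHom d n w ∈ (intCastHomQ d).range := by
  choose k hk using hw
  exact ⟨k, funext fun i => by simp [intCastHomQ_apply, hk, hn]⟩

def pairing (a : Fin d → ℤ) : (Fin d → ℚ) →+ ℚ :=
  AddMonoidHom.mk' (fun x => ∑ i, (a i : ℚ) * x i) fun x y => by
    simp [mul_add, Finset.sum_add_distrib]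

@[simp]
lemma pairing_apply (a : Fin d → ℤ) (x : Fin d → ℚ) : pairing a x = ∑ i, (a i : ℚ) * x i := rfl

lemma pairing_add (a b : Fin d → ℤ) (x : Fin d → ℚ) :
    pairing (a + b) x = pairing a x + pairing b x := by
  simp [add_mul, Finset.sum_add_distrib]

/-- The kernel of the character `x ↦ exp (2πi ⟨a, x⟩)` of `ℚ^d`. -/
def expCharKer (a : Fin d → ℤ) : AddSubgroup (Fin d → ℚ) :=
  (Int.castAddHom ℚ).range.comap (pairing a)

lemma exp_pairing_eq_one_iff (a : Fin d → ℤ) (x : Fin d → ℚ) :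
    exp (2 * π * I * (pairing a x : ℂ)) = 1 ↔ x ∈ expCharKer a := by
  rw [Complex.exp_eq_one_iff]
  change _ ↔ ∃ k : ℤ, (k : ℚ) = pairing a x
  refine exists_congr fun k => ?_
  rw [mul_comm (k : ℂ), mul_right_inj' Complex.two_pi_I_ne_zero, eq_comm]
  exact_mod_cast Iff.rfl

lemma intCastHomQ_range_le_expCharKer (a : Fin d → ℤ) :
    (intCastHomQ d).range ≤ expCharKer a := by
  rintro _ ⟨w, rfl⟩
  exact ⟨∑ i, a i * w i, by simp [intCastHomQ_apply]⟩

lemma expCharKer_inf_le (a b : Fin d → ℤ) :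
    expCharKer a ⊓ expCharKer b ≤ expCharKer (a + b) :=
  fun x ⟨ha, hb⟩ => by
    simpa only [expCharKer, AddSubgroup.mem_comap, pairing_add] using
      (Int.castAddHom ℚ).range.add_mem ha hb

lemma mem_expCharKer_add_iff {a b : Fin d → ℤ} {x : Fin d → ℚ} (hx : x ∈ expCharKer b) :
    x ∈ expCharKer (a + b) ↔ x ∈ expCharKer a := by
  simp only [expCharKer, AddSubgroup.mem_comap, pairing_add] at hx ⊢
  exact AddSubgroup.add_mem_cancel_right _ hx

noncomputable def rootTuple (d n : ℕ) (a : Fin d → ℤ) : Fin d → ℂ :=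
  fun i => exp (2 * π * I * ((a i : ℂ) / n))

lemma prod_rootTuple_zpow (a w : Fin d → ℤ) :
    ∏ i, rootTuple d n a i ^ w i =
      exp (2 * π * I * (pairing a (divHom d n w) : ℂ)) := by
  simp_rw [rootTuple, ← Complex.exp_int_mul, ← Complex.exp_sum]
  congr 1
  push_cast [pairing_apply, divHom_apply, Finset.mul_sum]
  exact Finset.sum_congr rfl fun i _ => by ring

lemma prod_rootTuple_pow (a : Fin d → ℤ) (m : Fin d →₀ ℕ) :
    ∏ i, rootTuple d n a i ^ m i =
      exp (2 * π * I * (pairing a (expQ d n m) : ℂ)) := by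
  rw [expQ_eq_divHom, ← prod_rootTuple_zpow]
  simp only [zpow_natCast]

lemma rootTuple_pow_eq_one (hn : n ≠ 0) (a : Fin d → ℤ) (i : Fin d) :
    rootTuple d n a i ^ n = 1 := by
  rw [rootTuple, ← Complex.exp_nat_mul, Complex.exp_eq_one_iff]
  exact ⟨a i, by field_simp⟩

lemma exists_rootTuple_eq (hn : n ≠ 0) {ε : Fin d → ℂ} (hε : ∀ i, ε i ^ n = 1) :
    ∃ a, rootTuple d n a = ε := by
  have := NeZero.mk hn
  choose k _ hk using fun i => (Complex.isPrimitiveRoot_exp n hn).eq_pow_of_pow_eq_one (hε i)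
  refine ⟨fun i => k i, funext fun i => ?_⟩
  rw [← hk i, rootTuple, ← Complex.exp_nat_mul]
  congr 1
  push_cast
  ring

lemma exists_addChar_apply_eq_exp (hn : n ≠ 0) (ψ : AddChar (Fin d → ZMod n) ℂ) :
    ∃ a : Fin d → ℤ, ∀ w : Fin d → ℤ,
      ψ (fun i => w i) = exp (2 * π * I * (pairing a (divHom d n w) : ℂ)) := by
  have hroot (i : Fin d) : ψ (Pi.single i 1) ^ n = 1 := by
    rw [← AddChar.map_nsmul_eq_pow, ← Pi.single_smul, nsmul_eq_mul, mul_one, ZMod.natCast_self,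
      Pi.single_zero, AddChar.map_zero_eq_one]
  obtain ⟨a, ha⟩ := exists_rootTuple_eq hn hroot
  refine ⟨a, fun w => ?_⟩
  have hw : (fun i => (w i : ZMod n)) = ∑ i, w i • Pi.single i 1 := by
    ext j; simp [Pi.single_apply]
  rw [← prod_rootTuple_zpow, ha, hw, AddChar.map_sum_eq_prod]
  simp only [AddChar.map_zsmul_eq_zpow]

lemma exists_expCharKer_separating (hn : n ≠ 0) {M : AddSubgroup (Fin d → ℚ)}
    (hM₀ : (intCastHomQ d).range ≤ M) (hMN : M ≤ (divHom d n).range) {v : Fin d → ℤ}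
    (hv : divHom d n v ∉ M) : ∃ a, M ≤ expCharKer a ∧ divHom d n v ∉ expCharKer a := by
  have := NeZero.mk hn
  -- `ρ` identifies `(1/n)ℤ^d / ℤ^d` with `(ZMod n)^d`; `H` is the image of `M` there.
  let ρ : (Fin d → ℤ) →+ (Fin d → ZMod n) := (Int.castAddHom (ZMod n)).compLeft (Fin d)
  let H := (M.comap (divHom d n)).map ρ
  have hvH : ρ v ∉ H := by
    rintro ⟨w, hw, hρ⟩
    have hdvd (i : Fin d) : (n : ℤ) ∣ (v - w) i := by
      rw [← ZMod.intCast_zmod_eq_zero_iff_dvd]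
      simpa [ρ, sub_eq_zero] using (congr_fun hρ i).symm
    have := M.add_mem (hM₀ (divHom_mem_intCastHomQ_range hn hdvd)) hw
    rw [← map_add, sub_add_cancel] at this
    exact hv this
  obtain ⟨ψ, hψ⟩ := (AddChar.exists_apply_ne_zero (a := QuotientAddGroup.mk' H (ρ v))).2
    (by simpa using hvH)
  obtain ⟨a, ha⟩ :=
    exists_addChar_apply_eq_exp hn (ψ.compAddMonoidHom (QuotientAddGroup.mk' H))
  refine ⟨a, fun x hx => ?_, ?_⟩
  · obtain ⟨w, rfl⟩ := hMN hx
    rw [← exp_pairing_eq_one_iff, ← ha]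
    have : QuotientAddGroup.mk' H (ρ w) = 0 := (QuotientAddGroup.eq_zero_iff _).2 ⟨w, hx, rfl⟩
    simp only [AddChar.compAddMonoidHom_apply]
    exact this ▸ ψ.map_zero_eq_one
  · rw [← exp_pairing_eq_one_iff, ← ha]
    exact hψ

lemma exists_expCharKer_separating₂ (hn : n ≠ 0) {M : AddSubgroup (Fin d → ℚ)}
    (hM₀ : (intCastHomQ d).range ≤ M) (hMN : M ≤ (divHom d n).range) {v w : Fin d → ℤ}
    (hv : divHom d n v ∉ M) (hw : divHom d n w ∉ M) :
    ∃ a, M ≤ expCharKer a ∧ divHom d n v ∉ expCharKer a ∧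
      divHom d n w ∉ expCharKer a := by
  obtain ⟨a, haM, hav⟩ := exists_expCharKer_separating hn hM₀ hMN hv
  obtain ⟨b, hbM, hbw⟩ := exists_expCharKer_separating hn hM₀ hMN hw
  -- If `a` fixes `w` and `b` fixes `v`, then `a + b` moves both.
  by_cases haw : divHom d n w ∈ expCharKer a
  · by_cases hbv : divHom d n v ∈ expCharKer b
    · refine ⟨a + b, (le_inf haM hbM).trans (expCharKer_inf_le a b), ?_, ?_⟩
      · rwa [mem_expCharKer_add_iff hbv]
      · rwa [add_comm, mem_expCharKer_add_iff haw]
    · exact ⟨b, hbM, hbv, hbw⟩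
  · exact ⟨a, haM, hav, haw⟩

def exponentsOutside (n : ℕ) (ζ : MvPowerSeries (Fin d) ℂ) (M : AddSubgroup (Fin d → ℚ)) :
    Set (Fin d →₀ ℕ) :=
  {m | coeff m ζ ≠ 0 ∧ expQ d n m ∉ M}

def HasLeastOutside (n : ℕ) (ζ : MvPowerSeries (Fin d) ℂ) (M : AddSubgroup (Fin d → ℚ)) :
    Prop :=
  (exponentsOutside n ζ M).Nonempty → ∃ m, IsLeast (exponentsOutside n ζ M) m

variable {ζ : MvPowerSeries (Fin d) ℂ}

lemma exponentsOutside_anti {M M' : AddSubgroup (Fin d → ℚ)} (h : M ≤ M') :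
    exponentsOutside n ζ M' ⊆ exponentsOutside n ζ M :=
  fun _ hm => ⟨hm.1, fun h' => hm.2 (h h')⟩

lemma coeff_rescale_rootTuple_sub_ne_zero_iff (a : Fin d → ℤ) (m : Fin d →₀ ℕ) :
    coeff m (rescale d (rootTuple d n a) ζ - ζ) ≠ 0 ↔
      m ∈ exponentsOutside n ζ (expCharKer a) := by
  rw [map_sub, show coeff m (rescale d (rootTuple d n a) ζ) = _ * _ from rfl, ← sub_one_mul,
    prod_rootTuple_pow, mul_ne_zero_iff, sub_ne_zero, Ne, exp_pairing_eq_one_iff, and_comm]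
  rfl

lemma rescale_rootTuple_iff (a : Fin d → ℤ) :
    (rescale d (rootTuple d n a) ζ = ζ ∨
      ∃ (m : Fin d →₀ ℕ) (H : MvPowerSeries (Fin d) ℂ), IsUnit H ∧
        rescale d (rootTuple d n a) ζ - ζ = monomial m 1 * H) ↔
      HasLeastOutside n ζ (expCharKer a) := by
  have hS : {m | coeff m (rescale d (rootTuple d n a) ζ - ζ) ≠ 0} =
      exponentsOutside n ζ (expCharKer a) :=
    Set.ext fun m => coeff_rescale_rootTuple_sub_ne_zero_iff a m
  have hzero : rescale d (rootTuple d n a) ζ - ζ = 0 ↔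
      exponentsOutside n ζ (expCharKer a) = ∅ := by
    simp [← hS, MvPowerSeries.ext_iff, Set.eq_empty_iff_forall_notMem]
  rw [MvPowerSeries.exists_monomial_mul_isUnit_iff, hS, ← sub_eq_zero, hzero, HasLeastOutside,
    ← Set.not_nonempty_iff_eq_empty, imp_iff_not_or]

lemma forall_rescale_iff (hn : n ≠ 0) :
    (∀ ε : Fin d → ℂ, (∀ i, ε i ^ n = 1) →
      (rescale d ε ζ = ζ ∨
        ∃ (m : Fin d →₀ ℕ) (H : MvPowerSeries (Fin d) ℂ), IsUnit H ∧
          rescale d ε ζ - ζ = monomial m 1 * H)) ↔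
      ∀ a, HasLeastOutside n ζ (expCharKer a) := by
  refine ⟨fun h a => (rescale_rootTuple_iff a).1 (h _ (rootTuple_pow_eq_one hn a)), ?_⟩
  intro h ε hε
  obtain ⟨a, rfl⟩ := exists_rootTuple_eq hn hε
  exact (rescale_rootTuple_iff a).2 (h a)

/-- A minimal exponent outside `M` is the least one: a character trivial on `M` that moves it and
a second exponent outside `M` reduces this to condition (a) for that character. -/
lemma hasLeastOutside_of_forall_expCharKer (hn : n ≠ 0)
    (h : ∀ a, HasLeastOutside n ζ (expCharKer a)) {M : AddSubgroup (Fin d → ℚ)}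
    (hM₀ : (intCastHomQ d).range ≤ M) (hMN : M ≤ (divHom d n).range) :
    HasLeastOutside n ζ M := by
  intro hne
  obtain ⟨m₀, hm₀, hmin⟩ := wellFounded_lt.has_min _ hne
  refine ⟨m₀, hm₀, fun m hm => ?_⟩
  obtain ⟨a, haM, ha₀, ha⟩ := exists_expCharKer_separating₂ hn hM₀ hMN
    (v := fun i => m₀ i) (w := fun i => m i)
    (by rw [← expQ_eq_divHom]; exact hm₀.2) (by rw [← expQ_eq_divHom]; exact hm.2)
  rw [← expQ_eq_divHom] at ha₀ ha
  obtain ⟨m₁, hm₁, hleast⟩ := h a ⟨m₀, hm₀.1, ha₀⟩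
  have : m₁ = m₀ :=
    (hleast ⟨hm₀.1, ha₀⟩).eq_of_not_lt (hmin m₁ (exponentsOutside_anti haM hm₁))
  exact this ▸ hleast ⟨hm.1, ha⟩

end QuasiOrdinary

open QuasiOrdinary

section Mlat

variable {d : ℕ} {lam lam' : ℕ → Fin d → ℚ}

lemma Mlat_mono (lam : ℕ → Fin d → ℚ) : Monotone (Mlat d lam) :=
  monotone_nat_of_le_succ fun _ => le_sup_left

lemma intCastHomQ_range_le_Mlat (lam : ℕ → Fin d → ℚ) (j : ℕ) :
    (intCastHomQ d).range ≤ Mlat d lam j :=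
  Mlat_mono lam (Nat.zero_le j)

lemma mem_Mlat_self {j : ℕ} (hj : 1 ≤ j) : lam j ∈ Mlat d lam j := by
  obtain ⟨k, rfl⟩ := Nat.exists_eq_add_of_le' hj
  exact (le_sup_right : _ ≤ Mlat d lam (k + 1)) (AddSubgroup.subset_closure rfl)

lemma Mlat_le {M : AddSubgroup (Fin d → ℚ)} {k : ℕ} (hM₀ : (intCastHomQ d).range ≤ M)
    (h : ∀ i, 1 ≤ i → i ≤ k → lam i ∈ M) : Mlat d lam k ≤ M := by
  induction k with
  | zero => exact hM₀
  | succ k ih =>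
    exact sup_le (ih fun i h1 h2 => h i h1 (by omega))
      ((AddSubgroup.closure_le _).2 (Set.singleton_subset_iff.2 (h _ (by omega) le_rfl)))

lemma intCastHomQ_range_sup_closure_le_Mlat {S : Set (Fin d → ℚ)} {k : ℕ}
    (hS : ∀ x ∈ S, ∃ i, 1 ≤ i ∧ i ≤ k ∧ x = lam i) :
    (intCastHomQ d).range ⊔ AddSubgroup.closure S ≤ Mlat d lam k := by
  refine sup_le (intCastHomQ_range_le_Mlat lam k) ((AddSubgroup.closure_le _).2 fun x hx => ?_)
  obtain ⟨i, h1, h2, rfl⟩ := hS x hx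
  exact Mlat_mono lam h2 (mem_Mlat_self h1)

lemma Mlat_congr {k : ℕ} (h : ∀ i, 1 ≤ i → i ≤ k → lam i = lam' i) :
    Mlat d lam k = Mlat d lam' k := by
  induction k with
  | zero => rfl
  | succ k ih =>
    simp only [Mlat, ih fun i h1 h2 => h i h1 (by omega), h (k + 1) (by omega) le_rfl]

end Mlat

lemma expQ_mem_intCastHomQ_range_sup_closure {d n g : ℕ} {ζ : MvPowerSeries (Fin d) ℂ}
    {lam : ℕ → Fin d → ℚ}
    (hlow : ∀ i, 1 ≤ i → i ≤ g → ∀ m ∈ exponentsOutside n ζ (Mlat d lam (i - 1)),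
      lam i ≤ expQ d n m)
    {m : Fin d →₀ ℕ} (hm : coeff m ζ ≠ 0) (hcov : expQ d n m ∈ Mlat d lam g) :
    expQ d n m ∈ (intCastHomQ d).range ⊔
      AddSubgroup.closure {x | ∃ j, 1 ≤ j ∧ j ≤ g ∧ lam j ≤ expQ d n m ∧ x = lam j} := by
  classical
  have hex : ∃ k, expQ d n m ∈ Mlat d lam k := ⟨g, hcov⟩
  have hk : Nat.find hex ≤ g := Nat.find_min' hex hcov
  refine Mlat_le le_sup_left (fun i h1 h2 => ?_) (Nat.find_spec hex)
  refine (le_sup_right : _ ≤ (intCastHomQ d).range ⊔ _) (AddSubgroup.subset_closure ?_)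
  exact ⟨i, h1, by omega, hlow i h1 (by omega) m ⟨hm, Nat.find_min hex (by omega)⟩, rfl⟩

namespace IsQOBranch

variable {d n g g' : ℕ} {ζ : MvPowerSeries (Fin d) ℂ} {lam lam' : ℕ → Fin d → ℚ}

lemma strictMonoOn (hq : IsQOBranch d n g ζ lam) : StrictMonoOn lam (Set.Icc 1 g) :=
  strictMonoOn_of_lt_succ Set.ordConnected_Icc fun j _ hj hj' =>
    hq.2.1 j hj.1 (by simp only [Order.succ_eq_add_one, Set.mem_Icc] at hj'; omega)

lemma exists_le_expQ_notMem {K : AddSubgroup (Fin d → ℚ)} (hq : IsQOBranch d n g ζ lam)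
    (hK : (intCastHomQ d).range ≤ K) {m : Fin d →₀ ℕ} (hm : m ∈ exponentsOutside n ζ K) :
    ∃ i, 1 ≤ i ∧ i ≤ g ∧ lam i ≤ expQ d n m ∧ lam i ∉ K := by
  by_contra! hall
  refine hm.2 (sup_le hK ((AddSubgroup.closure_le _).2 ?_) (hq.2.2.1 m hm.1))
  rintro _ ⟨i, h1, h2, hle, rfl⟩
  exact hall i h1 h2 hle

lemma le_expQ (hq : IsQOBranch d n g ζ lam) {j : ℕ} (h1 : 1 ≤ j) (h2 : j ≤ g)
    {m : Fin d →₀ ℕ} (hm : m ∈ exponentsOutside n ζ (Mlat d lam (j - 1))) :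
    lam j ≤ expQ d n m := by
  obtain ⟨i, hi1, hi2, hle, hi⟩ := exists_le_expQ_notMem hq (intCastHomQ_range_le_Mlat lam _) hm
  have hji : j ≤ i := by
    by_contra! hij
    exact hi (Mlat_mono lam (by omega) (mem_Mlat_self hi1))
  exact ((strictMonoOn hq).monotoneOn ⟨h1, h2⟩ ⟨hi1, hi2⟩ hji).trans hle

lemma isLeast (hq : IsQOBranch d n g ζ lam) {j : ℕ} (h1 : 1 ≤ j) (h2 : j ≤ g) :
    IsLeast (expQ d n '' exponentsOutside n ζ (Mlat d lam (j - 1))) (lam j) := by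
  obtain ⟨m, hm, hc⟩ := hq.1 j h1 h2
  refine ⟨⟨m, ⟨hc, hm ▸ hq.2.2.2 j h1 h2⟩, hm⟩, ?_⟩
  rintro _ ⟨m', hm', rfl⟩
  exact le_expQ hq h1 h2 hm'

lemma eq_of_isQOBranch (hq : IsQOBranch d n g ζ lam) (hq' : IsQOBranch d n g' ζ lam') :
    ∀ j, 1 ≤ j → j ≤ g → j ≤ g' → lam j = lam' j := by
  intro j
  induction j using Nat.strong_induction_on with
  | _ j ih =>
    intro h1 h2 h3
    have hM : Mlat d lam (j - 1) = Mlat d lam' (j - 1) :=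
      Mlat_congr fun i hi1 hi2 => ih i (by omega) hi1 (by omega) (by omega)
    exact (isLeast hq h1 h2).unique (hM ▸ isLeast hq' h1 h3)

lemma le_of_isQOBranch (hq : IsQOBranch d n g ζ lam) (hq' : IsQOBranch d n g' ζ lam') :
    g ≤ g' := by
  by_contra! hlt
  obtain ⟨m, hm, hc⟩ := hq.1 (g' + 1) (by omega) hlt
  have hM : Mlat d lam g' = Mlat d lam' g' :=
    Mlat_congr fun i hi1 hi2 => eq_of_isQOBranch hq hq' i hi1 (by omega) hi2
  apply hq.2.2.2 (g' + 1) (by omega) hlt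
  rw [Nat.add_sub_cancel, hM, ← hm]
  refine intCastHomQ_range_sup_closure_le_Mlat ?_ (hq'.2.2.1 m hc)
  rintro _ ⟨i, hi1, hi2, -, rfl⟩
  exact ⟨i, hi1, hi2, rfl⟩

lemma hasLeastOutside (hn : n ≠ 0) (hq : IsQOBranch d n g ζ lam)
    {K : AddSubgroup (Fin d → ℚ)} (hK : (intCastHomQ d).range ≤ K) : HasLeastOutside n ζ K := by
  classical
  rintro ⟨m, hm⟩
  have hex : ∃ j, 1 ≤ j ∧ j ≤ g ∧ lam j ∉ K := by
    obtain ⟨i, h1, h2, -, hi⟩ := exists_le_expQ_notMem hq hK hm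
    exact ⟨i, h1, h2, hi⟩
  obtain ⟨h1, h2, hj⟩ := Nat.find_spec hex
  obtain ⟨m₀, hm₀, hc₀⟩ := hq.1 _ h1 h2
  refine ⟨m₀, ⟨hc₀, hm₀ ▸ hj⟩, fun m' hm' => ?_⟩
  obtain ⟨i, hi1, hi2, hle, hi⟩ := exists_le_expQ_notMem hq hK hm'
  rw [← expQ_le_expQ_iff hn, hm₀]
  have hji : Nat.find hex ≤ i := Nat.find_min' hex ⟨hi1, hi2, hi⟩
  exact ((strictMonoOn hq).monotoneOn ⟨h1, h2⟩ ⟨hi1, hi2⟩ hji).trans hle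

end IsQOBranch

namespace QuasiOrdinary

variable {d n : ℕ}

section Construction

variable (n) (ζ : MvPowerSeries (Fin d) ℂ)

noncomputable def leastOutside (M : AddSubgroup (Fin d → ℚ)) : Fin d →₀ ℕ :=
  Classical.epsilon (IsLeast (exponentsOutside n ζ M))

/-- `M_j` for the greedy choice of exponents: `λ_{j+1}` is the least exponent of `ζ` outside
`M_j` (a junk value once there is none). -/
noncomputable def charLattice : ℕ → AddSubgroup (Fin d → ℚ)
  | 0 => (intCastHomQ d).range
  | j + 1 => charLattice j ⊔ AddSubgroup.closure {expQ d n (leastOutside n ζ (charLattice j))}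

noncomputable def charExp (j : ℕ) : Fin d → ℚ :=
  expQ d n (leastOutside n ζ (charLattice n ζ (j - 1)))

lemma Mlat_charExp (j : ℕ) : Mlat d (charExp n ζ) j = charLattice n ζ j := by
  induction j with
  | zero => rfl
  | succ j ih => rw [Mlat, ih]; rfl

variable {n ζ}

lemma charLattice_le_divHom_range (hn : n ≠ 0) (j : ℕ) :
    charLattice n ζ j ≤ (divHom d n).range := by
  rw [← Mlat_charExp]
  exact Mlat_le (intCastHomQ_range_le_divHom_range hn) fun i _ _ => expQ_mem_divHom_range _

lemma isLeast_leastOutside (hleast : ∀ j, HasLeastOutside n ζ (charLattice n ζ j)) {j : ℕ}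
    (hne : (exponentsOutside n ζ (charLattice n ζ j)).Nonempty) :
    IsLeast (exponentsOutside n ζ (charLattice n ζ j)) (leastOutside n ζ (charLattice n ζ j)) :=
  Classical.epsilon_spec (hleast j hne)

lemma exists_exponentsOutside_charLattice_eq_empty (hn : n ≠ 0)
    (hleast : ∀ j, HasLeastOutside n ζ (charLattice n ζ j)) :
    ∃ g, exponentsOutside n ζ (charLattice n ζ g) = ∅ := by
  by_contra! hne
  obtain ⟨j, hj⟩ := exists_not_lt_succ_of_le_range (divHom d n) (charLattice n ζ)
    (charLattice_le_divHom_range hn)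
  have hout := (isLeast_leastOutside hleast (hne j)).1.2
  exact hj (SetLike.lt_iff_le_and_exists.2 ⟨le_sup_left, _,
    (le_sup_right : _ ≤ charLattice n ζ (j + 1)) (AddSubgroup.subset_closure rfl), hout⟩)

lemma isQOBranch_charExp (hn : n ≠ 0) (hleast : ∀ j, HasLeastOutside n ζ (charLattice n ζ j))
    {g : ℕ} (hg : exponentsOutside n ζ (charLattice n ζ g) = ∅)
    (hlt : ∀ j < g, (exponentsOutside n ζ (charLattice n ζ j)).Nonempty) :
    IsQOBranch d n g ζ (charExp n ζ) := by
  have hL (j : ℕ) (hj : j < g) := isLeast_leastOutside hleast (hlt j hj)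
  have hlow (i : ℕ) (h1 : 1 ≤ i) (h2 : i ≤ g) (m : Fin d →₀ ℕ)
      (hm : m ∈ exponentsOutside n ζ (Mlat d (charExp n ζ) (i - 1))) :
      charExp n ζ i ≤ expQ d n m := by
    rw [Mlat_charExp] at hm
    exact (expQ_le_expQ_iff hn).2 ((hL (i - 1) (by omega)).2 hm)
  refine ⟨fun j h1 h2 => ⟨_, rfl, (hL (j - 1) (by omega)).1.1⟩, fun j h1 h2 => ?_,
    fun m hm => ?_, fun j h1 h2 => ?_⟩
  · have hnext : leastOutside n ζ (charLattice n ζ j) ∈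
        exponentsOutside n ζ (Mlat d (charExp n ζ) j) := by
      rw [Mlat_charExp]; exact (hL j h2).1
    refine lt_of_le_of_ne (hlow j h1 h2.le _ (exponentsOutside_anti (Mlat_mono _ (by omega)) hnext))
      fun heq => hnext.2 ?_
    change charExp n ζ (j + 1) ∈ _
    rw [← heq]
    exact mem_Mlat_self h1
  · refine expQ_mem_intCastHomQ_range_sup_closure hlow hm ?_
    rw [Mlat_charExp]
    by_contra hout
    exact hg.subset ⟨hm, hout⟩
  · rw [Mlat_charExp]
    exact (hL (j - 1) (by omega)).1.2

lemma exists_isQOBranch (hn : n ≠ 0) (h : ∀ a, HasLeastOutside n ζ (expCharKer a)) :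
    ∃ g lam, IsQOBranch d n g ζ lam := by
  classical
  have hleast (j : ℕ) : HasLeastOutside n ζ (charLattice n ζ j) :=
    hasLeastOutside_of_forall_expCharKer hn h
      (Mlat_charExp n ζ j ▸ intCastHomQ_range_le_Mlat _ j) (charLattice_le_divHom_range hn j)
  have hex := exists_exponentsOutside_charLattice_eq_empty hn hleast
  exact ⟨_, _, isQOBranch_charExp hn hleast (Nat.find_spec hex)
    fun j hj => Set.nonempty_iff_ne_empty.2 (Nat.find_min hex hj)⟩

end Construction

end QuasiOrdinary

theorem stmt_16_general (d n : ℕ) (hn : 1 ≤ n)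
    (ζ : MvPowerSeries (Fin d) ℂ) :
    ((∀ ε : Fin d → ℂ, (∀ i, ε i ^ n = 1) →
        (rescale d ε ζ = ζ ∨
          ∃ (m : Fin d →₀ ℕ) (H : MvPowerSeries (Fin d) ℂ), IsUnit H ∧
            rescale d ε ζ - ζ = MvPowerSeries.monomial m 1 * H))
      ↔ (∃ (g : ℕ) (lam : ℕ → Fin d → ℚ), IsQOBranch d n g ζ lam)) ∧
    (∀ (g g' : ℕ) (lam lam' : ℕ → Fin d → ℚ),
      IsQOBranch d n g ζ lam → IsQOBranch d n g' ζ lam' →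
      g = g' ∧ ∀ j, 1 ≤ j → j ≤ g → lam j = lam' j) := by
  have hn₀ : n ≠ 0 := by omega
  refine ⟨?_, fun g g' lam lam' hq hq' => ?_⟩
  · rw [forall_rescale_iff hn₀]
    exact ⟨exists_isQOBranch hn₀, fun ⟨_, _, hq⟩ a =>
      IsQOBranch.hasLeastOutside hn₀ hq (intCastHomQ_range_le_expCharKer a)⟩
  · have hg : g = g' :=
      (IsQOBranch.le_of_isQOBranch hq hq').antisymm (IsQOBranch.le_of_isQOBranch hq' hq)
    exact ⟨hg, fun j h1 h2 => IsQOBranch.eq_of_isQOBranch hq hq' j h1 h2 (hg ▸ h2)⟩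

/-- For a nonunit `ζ ∈ R_n`, the following are equivalent:
(a) for every `d`-tuple `ε` of `n`-th roots of unity, `σ_ε(ζ) − ζ` is zero or a monomial times
a unit (i.e. the minimal polynomial of `ζ` over `ℂ[[X₁,…,X_d]]` is quasi-ordinary);
(b) `ζ` is a quasi-ordinary branch, i.e. it admits characteristic exponents.
Moreover the characteristic exponents, when they exist, are unique. -/
theorem stmt_16 (d n : ℕ) (hd : 1 ≤ d) (hn : 1 ≤ n)
    (ζ : MvPowerSeries (Fin d) ℂ) (hζ : ¬ IsUnit ζ) :
    ((∀ ε : Fin d → ℂ, (∀ i, ε i ^ n = 1) →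
        (rescale d ε ζ = ζ ∨
          ∃ (m : Fin d →₀ ℕ) (H : MvPowerSeries (Fin d) ℂ), IsUnit H ∧
            rescale d ε ζ - ζ = MvPowerSeries.monomial m 1 * H))
      ↔ (∃ (g : ℕ) (lam : ℕ → Fin d → ℚ), IsQOBranch d n g ζ lam)) ∧
    (∀ (g g' : ℕ) (lam lam' : ℕ → Fin d → ℚ),
      IsQOBranch d n g ζ lam → IsQOBranch d n g' ζ lam' →
      g = g' ∧ ∀ j, 1 ≤ j → j ≤ g → lam j = lam' j) :=
  stmt_16_general d n hn ζ
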